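/- (Oblate spheroid) Let a_1 = a_2 > a_3 > 0 and set g = √(a_1² − a_3²). Then the demagnetizing factors satisfy P_3 = (a_1²/g³) · (g + a_3 · arctan(a_3/g) − a_3 π/2) and P_1 = P_2 = (1 − P_3)/2. -/

import Mathlib

/-!
For any ellipsoid `P₁ + P₂ + P₃ = 1`: the integrand of `2 (P₁ + P₂ + P₃)` is the derivative of
`-2 ∏ⱼ aⱼ / √(aⱼ² + t)`, which rises from `-2` at `t = 0` to `0` at infinity. For the oblate
spheroid `P₁ = P₂` by symmetry, so only `P₃` needs computing. Substituting `s = √(a₃² + t)` turns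
`a₁² + t` into `s² + g²`, and `-1/s - arctan (s / g) / g`, whose derivative is
`1/s² - 1/(s² + g²)`, yields an antiderivative of the integrand of `P₃`.
-/

open MeasureTheory Real Set

/-- The `i`-th demagnetizing factor
`P i = (1/2) ∫_0^∞ (a i ^ 2 + t)⁻¹ ∏ j, a j / √(a j ^ 2 + t) dt`. -/
noncomputable def demagFactor (a : Fin 3 → ℝ) (i : Fin 3) : ℝ :=
  (1 / 2) * ∫ t in Ioi (0 : ℝ), (a i ^ 2 + t)⁻¹ * ∏ j, a j / Real.sqrt (a j ^ 2 + t)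

open Filter Topology

theorem hasDerivAt_sqrt_sq_add {c x : ℝ} (h : 0 < c ^ 2 + x) :
    HasDerivAt (fun t => √(c ^ 2 + t)) (1 / (2 * √(c ^ 2 + x))) x := by
  simpa using ((hasDerivAt_id x).const_add (c ^ 2)).sqrt h.ne'

theorem tendsto_sqrt_sq_add_atTop (c : ℝ) : Tendsto (fun t => √(c ^ 2 + t)) atTop atTop :=
  tendsto_sqrt_atTop.comp (tendsto_atTop_add_const_left _ _ tendsto_id)

section SumRule

variable {ι : Type*} [Fintype ι] (a : ι → ℝ)

theorem hasDerivAt_prod_div_sqrt_sq_add {x : ℝ} (h : ∀ j, 0 < a j ^ 2 + x) :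
    HasDerivAt (fun t => ∏ j, a j / √(a j ^ 2 + t))
      (-(∑ i, (a i ^ 2 + x)⁻¹ * ∏ j, a j / √(a j ^ 2 + x)) / 2) x := by
  classical
  have hfactor (j : ι) : HasDerivAt (fun t => a j / √(a j ^ 2 + t))
      (-(a j ^ 2 + x)⁻¹ * (a j / √(a j ^ 2 + x)) / 2) x := by
    refine (((hasDerivAt_sqrt_sq_add (h j)).inv (sqrt_pos.2 (h j)).ne').const_mul
      (a j)).congr_deriv ?_
    rw [sq_sqrt (h j).le]
    field_simp
  refine (HasDerivAt.fun_finsetProd (u := Finset.univ) fun j _ => hfactor j).congr_deriv ?_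
  rw [neg_div, Finset.sum_div, ← Finset.sum_neg_distrib]
  refine Finset.sum_congr rfl fun i _ => ?_
  rw [← Finset.mul_prod_erase _ _ (Finset.mem_univ i), smul_eq_mul]
  ring

theorem tendsto_prod_div_sqrt_sq_add [Nonempty ι] :
    Tendsto (fun t => ∏ j, a j / √(a j ^ 2 + t)) atTop (𝓝 0) := by
  simpa [Finset.prod_const, Finset.card_univ, Fintype.card_ne_zero] using
    tendsto_finsetProd Finset.univ fun j _ =>
      tendsto_const_nhds.div_atTop (tendsto_sqrt_sq_add_atTop (a j))

theorem sum_integral_inv_mul_prod_div_sqrt_sq_add [Nonempty ι] (ha : ∀ j, 0 < a j) :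
    ∑ i, ∫ t in Ioi 0, (a i ^ 2 + t)⁻¹ * ∏ j, a j / √(a j ^ 2 + t) = 2 := by
  set f := fun i t => (a i ^ 2 + t)⁻¹ * ∏ j, a j / √(a j ^ 2 + t)
  have hf_nonneg (i : ι) {t : ℝ} (ht : 0 ≤ t) : 0 ≤ f i t :=
    mul_nonneg (by positivity) (Finset.prod_nonneg fun j _ => div_nonneg (ha j).le (sqrt_nonneg _))
  have hderiv : ∀ x ∈ Ici (0 : ℝ),
      HasDerivAt (fun t => -2 * ∏ j, a j / √(a j ^ 2 + t)) (∑ i, f i x) x := fun x (hx : 0 ≤ x) =>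
    ((hasDerivAt_prod_div_sqrt_sq_add a fun j => by have := ha j; positivity).const_mul
      (-2)).congr_deriv (by ring)
  have hlim : Tendsto (fun t => -2 * ∏ j, a j / √(a j ^ 2 + t)) atTop (𝓝 0) := by
    simpa using (tendsto_prod_div_sqrt_sq_add a).const_mul (-2)
  have hsum_nonneg : ∀ x ∈ Ioi (0 : ℝ), 0 ≤ ∑ i, f i x := fun x (hx : 0 < x) =>
    Finset.sum_nonneg fun i _ => hf_nonneg i hx.le
  have hint : IntegrableOn (fun x => ∑ i, f i x) (Ioi 0) :=
    integrableOn_Ioi_deriv_of_nonneg' hderiv hsum_nonneg hlim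
  have hint_i (i : ι) : IntegrableOn (f i) (Ioi 0) := by
    refine hint.mono' (by fun_prop)
      (ae_restrict_of_forall_mem measurableSet_Ioi fun x (hx : 0 < x) => ?_)
    rw [Real.norm_of_nonneg (hf_nonneg i hx.le)]
    exact Finset.single_le_sum (fun j _ => hf_nonneg j hx.le) (Finset.mem_univ i)
  rw [← integral_finsetSum _ fun i _ => hint_i i,
    integral_Ioi_of_hasDerivAt_of_nonneg' hderiv hsum_nonneg hlim,
    Finset.prod_eq_one fun j _ => by rw [add_zero, sqrt_sq (ha j).le, div_self (ha j).ne']]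
  norm_num

end SumRule

theorem sum_demagFactor {a : Fin 3 → ℝ} (ha : ∀ j, 0 < a j) : ∑ i, demagFactor a i = 1 := by
  simp only [demagFactor, ← Finset.mul_sum, sum_integral_inv_mul_prod_div_sqrt_sq_add a ha]
  norm_num

theorem hasDerivAt_neg_inv_sub_arctan_div {g s : ℝ} (hg : g ≠ 0) (hs : s ≠ 0) :
    HasDerivAt (fun s => -s⁻¹ - arctan (s / g) / g) ((s ^ 2)⁻¹ - (s ^ 2 + g ^ 2)⁻¹) s := by
  have := (hasDerivAt_inv hs).neg.sub (((hasDerivAt_id' s).div_const g).arctan.div_const g)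
  refine this.congr_deriv ?_
  field_simp
  ring

theorem integral_demag_oblate_axial {A C g : ℝ} (hC : 0 < C) (hg : 0 < g)
    (hA : A ^ 2 = C ^ 2 + g ^ 2) :
    ∫ t in Ioi 0, (C ^ 2 + t)⁻¹ * (A / √(A ^ 2 + t) * (A / √(A ^ 2 + t)) * (C / √(C ^ 2 + t))) =
      2 * (A ^ 2 / g ^ 3) * (g + C * arctan (C / g) - C * π / 2) := by
  set F := fun s => -s⁻¹ - arctan (s / g) / g
  have hderiv : ∀ x ∈ Ici (0 : ℝ), HasDerivAt (fun t => 2 * A ^ 2 * C / g ^ 2 * F √(C ^ 2 + t))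
      ((C ^ 2 + x)⁻¹ * (A / √(A ^ 2 + x) * (A / √(A ^ 2 + x)) * (C / √(C ^ 2 + x)))) x := by
    intro x (hx : 0 ≤ x)
    have hCx : 0 < C ^ 2 + x := by positivity
    have hs := sqrt_pos.2 hCx
    refine (((hasDerivAt_neg_inv_sub_arctan_div hg.ne' hs.ne').comp x
      (hasDerivAt_sqrt_sq_add hCx)).const_mul _).congr_deriv ?_
    rw [sq_sqrt hCx.le, div_mul_div_comm, ← sq A, mul_self_sqrt (by positivity), hA]
    field_simp
    ring
  have hnonneg : ∀ x ∈ Ioi (0 : ℝ),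
      0 ≤ (C ^ 2 + x)⁻¹ * (A / √(A ^ 2 + x) * (A / √(A ^ 2 + x)) * (C / √(C ^ 2 + x))) :=
    fun x (hx : 0 < x) =>
      mul_nonneg (by positivity) (mul_nonneg (mul_self_nonneg _) (by positivity))
  have hlim : Tendsto (fun t => 2 * A ^ 2 * C / g ^ 2 * F √(C ^ 2 + t)) atTop
      (𝓝 (2 * A ^ 2 * C / g ^ 2 * (-0 - π / 2 / g))) := by
    have hF : Tendsto F atTop (𝓝 (-0 - π / 2 / g)) :=
      tendsto_inv_atTop_zero.neg.sub (((tendsto_arctan_atTop.mono_right nhdsWithin_le_nhds).comp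
        (tendsto_id.atTop_div_const hg)).div_const g)
    exact (hF.comp (tendsto_sqrt_sq_add_atTop C)).const_mul _
  rw [integral_Ioi_of_hasDerivAt_of_nonneg' hderiv hnonneg hlim]
  simp only [F, add_zero, sqrt_sq hC.le]
  field_simp
  ring

/-- oblate spheroid: if `a 1 = a 2 > a 3 > 0` and `g = √(a 1 ² − a 3 ²)`,
then `P 3 = (a 1 ²/g³)(g + a 3 · arctan (a 3 / g) − a 3 π / 2)` and
`P 1 = P 2 = (1 − P 3)/2`. -/
theorem demagFactor_oblate_spheroid
    (a : Fin 3 → ℝ) (ha3 : 0 < a 2) (heq : a 0 = a 1) (hlt : a 2 < a 0)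
    (g : ℝ) (hg : g = Real.sqrt (a 0 ^ 2 - a 2 ^ 2)) :
    demagFactor a 2 =
      (a 0 ^ 2 / g ^ 3) * (g + a 2 * Real.arctan (a 2 / g) - a 2 * π / 2) ∧
    demagFactor a 0 = (1 - demagFactor a 2) / 2 ∧
    demagFactor a 1 = (1 - demagFactor a 2) / 2 := by
  have ha0 : 0 < a 0 := ha3.trans hlt
  have hsq : 0 < a 0 ^ 2 - a 2 ^ 2 := sub_pos.2 (pow_lt_pow_left₀ hlt ha3.le two_ne_zero)
  have hg_pos : 0 < g := hg ▸ sqrt_pos.2 hsq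
  have hg_sq : a 0 ^ 2 = a 2 ^ 2 + g ^ 2 := by rw [hg, sq_sqrt hsq.le]; ring
  have h2 : demagFactor a 2 =
      (a 0 ^ 2 / g ^ 3) * (g + a 2 * arctan (a 2 / g) - a 2 * π / 2) := by
    simp only [demagFactor, Fin.prod_univ_three, ← heq]
    rw [integral_demag_oblate_axial ha3 hg_pos hg_sq]
    ring
  have h01 : demagFactor a 0 = demagFactor a 1 := by simp only [demagFactor, heq]
  have hsum := sum_demagFactor fun j => by fin_cases j; exacts [ha0, heq ▸ ha0, ha3]
  rw [Fin.sum_univ_three] at hsum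
  exact ⟨h2, by linarith, by linarith⟩
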